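/- arXiv:2308.12000 — 3 statements merged into one kernel-verified Lean document; each statement's English description precedes it below -/
import Mathlib

section
/- Let φ(ξ) = log(1+e^ξ), φ'(ξ) = e^ξ/(1+e^ξ), and d̄(α,β) = φ(α) - φ(β) - (α-β)φ'(β). Fix α < 0 and x ∈ (1/2, 1], set ξ₁ = -α/(2x-1), ξ₂ = α/(2x-1), x̃ = (1/2 + x)/2, and ξ̃ = (1-x̃)ξ₁ + x̃ξ₂. Then d̄(ξ₁, ξ̃) > d̄(ξ₂, ξ̃). -/
/-!
Write `φ(t) = log (1 + eᵗ)`. Since `φ(t) - φ(-t) = t` and `φ' = σ` is the sigmoid,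
`d̄(t, b) - d̄(-t, b) = t - 2t σ(b) = t (1 - 2σ(b))`, which is positive for `t > 0` exactly
when `b < 0`. Here `ξ₂ = -ξ₁` with `ξ₁ > 0`, and `ξ̃ = (1 - 2x̃) ξ₁ < 0` because `x̃ > 1/2`.
-/

open Real

def bregmanDiv (φ φ' : ℝ → ℝ) (a b : ℝ) : ℝ := φ a - φ b - (a - b) * φ' b

lemma bregmanDiv_sub_bregmanDiv (φ φ' : ℝ → ℝ) (a c b : ℝ) :
    bregmanDiv φ φ' a b - bregmanDiv φ φ' c b = φ a - φ c - (a - c) * φ' b := by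
  unfold bregmanDiv
  ring

lemma log_one_add_exp_sub_log_one_add_exp_neg (t : ℝ) :
    log (1 + exp t) - log (1 + exp (-t)) = t := by
  have hfactor : 1 + exp t = exp t * (1 + exp (-t)) := by
    rw [mul_add, mul_one, ← exp_add, add_neg_cancel, exp_zero, add_comm]
  rw [hfactor, log_mul (exp_ne_zero t) (by positivity), log_exp, add_sub_cancel_right]

lemma exp_div_one_add_exp (t : ℝ) : exp t / (1 + exp t) = sigmoid t := by
  rw [sigmoid_def, exp_neg]
  field_simp
  ring

theorem bregmanDiv_softplus_neg_lt {t b : ℝ} (ht : 0 < t) (hb : b < 0) :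
    bregmanDiv (fun s => log (1 + exp s)) (fun s => exp s / (1 + exp s)) (-t) b <
      bregmanDiv (fun s => log (1 + exp s)) (fun s => exp s / (1 + exp s)) t b := by
  have hσ : sigmoid b < 1 / 2 := by simpa using sigmoid_lt hb
  rw [← sub_pos, bregmanDiv_sub_bregmanDiv, log_one_add_exp_sub_log_one_add_exp_neg,
    exp_div_one_add_exp]
  nlinarith

theorem stmt_8 (α x : ℝ) (hα : α < 0) (hx : x ∈ Set.Ioc (1/2 : ℝ) 1) :
    let φ : ℝ → ℝ := fun t => Real.log (1 + Real.exp t)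
    let φ' : ℝ → ℝ := fun t => Real.exp t / (1 + Real.exp t)
    let d : ℝ → ℝ → ℝ := fun a b => φ a - φ b - (a - b) * φ' b
    let ξ₁ : ℝ := -α / (2 * x - 1)
    let ξ₂ : ℝ := α / (2 * x - 1)
    let x' : ℝ := (1/2 + x) / 2
    let ξ' : ℝ := (1 - x') * ξ₁ + x' * ξ₂
    d ξ₁ ξ' > d ξ₂ ξ' := by
  intro φ φ' d ξ₁ ξ₂ x' ξ'
  have hden : 0 < 2 * x - 1 := by linarith [hx.1]
  have hξ₁ : 0 < ξ₁ := div_pos (neg_pos.mpr hα) hden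
  have hξ₂ : ξ₂ = -ξ₁ := by simp only [ξ₁, ξ₂, neg_div, neg_neg]
  have hξ' : ξ' = (1 - 2 * x') * ξ₁ := by simp only [ξ', hξ₂]; ring
  have hξ'_neg : ξ' < 0 := by
    rw [hξ']
    exact mul_neg_of_neg_of_pos (by simp only [x']; linarith) hξ₁
  rw [hξ₂]
  exact bregmanDiv_softplus_neg_lt hξ₁ hξ'_neg
end

section
/- For μ₁, μ₂ ∈ (0,1) with μ₁ > μ₂ and μ₁ + μ₂ ≥ 1, let ĝ(x) = (1-μ₁)^{1-x}(1-μ₂)^x + μ₁^{1-x}μ₂^x for x ∈ [0,1]. Suppose x* ∈ (0,1) satisfies ĝ'(x*) = 0. Then for all δ ∈ (0, min(x*, 1-x*)], ĝ(x*+δ) ≥ ĝ(x*-δ). -/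
/-!
Write `ĝ x = A * exp (α * x) + B * exp (β * x)` with `A = 1 - μ₁`, `B = μ₁`,
`α = log ((1 - μ₂) / (1 - μ₁))` and `β = log (μ₂ / μ₁)`. Then `β ≤ 0 ≤ -β ≤ α`, the last inequality
being `μ₁ (1 - μ₁) ≤ μ₂ (1 - μ₂)`, i.e. `μ₁ + μ₂ ≥ 1`. With `A' = A e^{α x*}` and `B' = B e^{β x*}`,
`ĝ (x* + δ) - ĝ (x* - δ) = 2 (A' sinh (α δ) + B' sinh (β δ))`, and criticality says
`α A' = -β B'`. So the difference has the sign of `sinh (α δ) / α - sinh (-β δ) / (-β)`, which is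
nonnegative because `sinh t / t` increases on `(0, ∞)`, sinh being convex there with `sinh 0 = 0`.
-/

open Real Set

namespace Real

theorem convexOn_sinh : ConvexOn ℝ (Ici 0) sinh := by
  refine MonotoneOn.convexOn_of_deriv (convex_Ici 0) continuous_sinh.continuousOn
    differentiable_sinh.differentiableOn ?_
  rw [deriv_sinh, interior_Ici]
  exact cosh_strictMonoOn.monotoneOn.mono Ioi_subset_Ici_self

theorem mul_sinh_mul_le {a b t : ℝ} (ha : 0 ≤ a) (hab : a ≤ b) (ht : 0 ≤ t) :
    b * sinh (a * t) ≤ a * sinh (b * t) := by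
  rcases ha.eq_or_lt with rfl | ha
  · simp
  rcases ht.eq_or_lt with rfl | ht
  · simp
  have hat : 0 < a * t := mul_pos ha ht
  have hbt : 0 < b * t := mul_pos (ha.trans_le hab) ht
  have hslope := convexOn_sinh.secant_mono (a := 0) self_mem_Ici hat.le hbt.le hat.ne' hbt.ne'
    (mul_le_mul_of_nonneg_right hab ht.le)
  simp only [sinh_zero, sub_zero] at hslope
  rw [div_le_div_iff₀ hat hbt] at hslope
  nlinarith

end Real

theorem mul_sinh_add_mul_sinh_nonneg {A B α β δ : ℝ} (hB : 0 ≤ B) (hβ : β ≤ 0) (hαβ : -β ≤ α)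
    (hcrit : α * A + β * B = 0) (hδ : 0 ≤ δ) :
    0 ≤ A * sinh (α * δ) + B * sinh (β * δ) := by
  rcases (show 0 ≤ α by linarith).eq_or_lt with rfl | hα
  · obtain rfl : β = 0 := by linarith
    simp
  have hsinh : sinh (β * δ) = -sinh (-β * δ) := by rw [neg_mul, sinh_neg, neg_neg]
  refine nonneg_of_mul_nonneg_right ?_ hα
  calc 0 ≤ B * (-β * sinh (α * δ) - α * sinh (-β * δ)) :=
        mul_nonneg hB (sub_nonneg.2 (mul_sinh_mul_le (neg_nonneg.2 hβ) hαβ hδ))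
    _ = α * (A * sinh (α * δ) + B * sinh (β * δ)) := by
        rw [hsinh]; linear_combination -sinh (α * δ) * hcrit

theorem mul_exp_add_mul_exp_le_of_deriv_eq_zero {A B α β x₀ δ : ℝ} (hB : 0 ≤ B) (hβ : β ≤ 0)
    (hαβ : -β ≤ α) (hcrit : deriv (fun x => A * exp (α * x) + B * exp (β * x)) x₀ = 0)
    (hδ : 0 ≤ δ) :
    A * exp (α * (x₀ - δ)) + B * exp (β * (x₀ - δ)) ≤
      A * exp (α * (x₀ + δ)) + B * exp (β * (x₀ + δ)) := by
  have hderiv : HasDerivAt (fun x => A * exp (α * x) + B * exp (β * x))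
      (α * (A * exp (α * x₀)) + β * (B * exp (β * x₀))) x₀ := by
    have hexp (c γ : ℝ) : HasDerivAt (fun x => c * exp (γ * x)) (γ * (c * exp (γ * x₀))) x₀ :=
      (((hasDerivAt_id' x₀).const_mul γ).exp.const_mul c).congr_deriv (by ring)
    exact (hexp A α).add (hexp B β)
  have hsinh := mul_sinh_add_mul_sinh_nonneg (mul_nonneg hB (exp_pos (β * x₀)).le) hβ hαβ
    (hderiv.deriv ▸ hcrit) hδ
  have hdiff : A * exp (α * (x₀ + δ)) + B * exp (β * (x₀ + δ)) -
      (A * exp (α * (x₀ - δ)) + B * exp (β * (x₀ - δ))) =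
      2 * (A * exp (α * x₀) * sinh (α * δ) + B * exp (β * x₀) * sinh (β * δ)) := by
    simp only [sinh_eq, mul_add, mul_sub, exp_add, exp_sub, exp_neg]
    field_simp
    ring
  linarith

theorem rpow_one_sub_mul_rpow {p q : ℝ} (hp : 0 < p) (hq : 0 < q) (x : ℝ) :
    p ^ (1 - x) * q ^ x = p * exp (log (q / p) * x) := by
  calc p ^ (1 - x) * q ^ x = exp (log p + (log q - log p) * x) := by
        rw [rpow_def_of_pos hp, rpow_def_of_pos hq, ← exp_add]
        ring_nf
    _ = p * exp (log (q / p) * x) := by rw [exp_add, exp_log hp, log_div hq.ne' hp.ne']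

theorem stmt_12_general (μ₁ μ₂ : ℝ) (h₁ : μ₁ ∈ Set.Ioo (0:ℝ) 1) (h₂ : μ₂ ∈ Set.Ioo (0:ℝ) 1)
    (hgt : μ₁ > μ₂) (hsum : μ₁ + μ₂ ≥ 1)
    (g : ℝ → ℝ)
    (hg : g = fun x => (1 - μ₁) ^ (1 - x) * (1 - μ₂) ^ x + μ₁ ^ (1 - x) * μ₂ ^ x)
    (xs : ℝ) (hcrit : deriv g xs = 0) :
    ∀ δ : ℝ, δ ∈ Set.Ioc (0:ℝ) (min xs (1 - xs)) → g (xs + δ) ≥ g (xs - δ) := by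
  obtain ⟨hμ₁, hμ₁'⟩ := h₁
  obtain ⟨hμ₂, hμ₂'⟩ := h₂
  have hg_exp : g = fun x => (1 - μ₁) * exp (log ((1 - μ₂) / (1 - μ₁)) * x) +
      μ₁ * exp (log (μ₂ / μ₁) * x) := by
    rw [hg]
    funext x
    rw [rpow_one_sub_mul_rpow (by linarith) (by linarith), rpow_one_sub_mul_rpow hμ₁ hμ₂]
  have hβ : log (μ₂ / μ₁) ≤ 0 := log_nonpos (by positivity) ((div_le_one hμ₁).2 hgt.le)
  have hαβ : -log (μ₂ / μ₁) ≤ log ((1 - μ₂) / (1 - μ₁)) := by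
    rw [← log_inv, inv_div]
    refine log_le_log (by positivity) ((div_le_div_iff₀ hμ₂ (by linarith)).2 ?_)
    nlinarith
  intro δ hδ
  subst hg_exp
  exact mul_exp_add_mul_exp_le_of_deriv_eq_zero hμ₁.le hβ hαβ hcrit hδ.1.le

theorem stmt_12 (μ₁ μ₂ : ℝ) (h₁ : μ₁ ∈ Set.Ioo (0:ℝ) 1) (h₂ : μ₂ ∈ Set.Ioo (0:ℝ) 1)
    (hgt : μ₁ > μ₂) (hsum : μ₁ + μ₂ ≥ 1)
    (g : ℝ → ℝ)
    (hg : g = fun x => (1 - μ₁) ^ (1 - x) * (1 - μ₂) ^ x + μ₁ ^ (1 - x) * μ₂ ^ x)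
    (xs : ℝ) (hxs : xs ∈ Set.Ioo (0:ℝ) 1) (hcrit : deriv g xs = 0) :
    ∀ δ : ℝ, δ ∈ Set.Ioc (0:ℝ) (min xs (1 - xs)) → g (xs + δ) ≥ g (xs - δ) :=
  stmt_12_general μ₁ μ₂ h₁ h₂ hgt hsum g hg xs hcrit
end

section
/- Let φ(ξ) = log(1+e^ξ) with derivative φ', and for ξ₁ ≠ ξ₂ define η(ξ₁,ξ₂) = (φ')⁻¹((φ(ξ₁)-φ(ξ₂))/(ξ₁-ξ₂)) and the Bregman divergence d̄(α,β) = φ(α)-φ(β)-(α-β)φ'(β). For ξ₁ > ξ₂ and x̃ ∈ (0,1), set ξ̃ = (1-x̃)ξ₁ + x̃ξ₂. Then η(ξ₁,ξ₂) > ξ̃ if and only if d̄(ξ₁, ξ̃) > d̄(ξ₂, ξ̃). -/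
open Real Set Function

lemma hasDerivAt_log_one_add_exp (t : ℝ) :
    HasDerivAt (fun t => log (1 + exp t)) (sigmoid t) t := by
  have h := ((hasDerivAt_exp t).const_add 1).log (by positivity)
  convert h using 1
  rw [sigmoid_def, exp_neg]
  field_simp
  ring

lemma deriv_log_one_add_exp : deriv (fun t => log (1 + exp t)) = sigmoid :=
  funext fun t => (hasDerivAt_log_one_add_exp t).deriv

/-- The difference of the Bregman divergences `d(a, c) - d(b, c)` is
`(a - b) (f'(η) - f'(c))`, with `η` the mean-value point of `f` on `[b, a]`; strict monotonicity of
`f'` makes `η` unique and turns the sign of this difference into the comparison `c < η`. -/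
theorem lt_invFun_deriv_slope_iff {f : ℝ → ℝ} (hf : Differentiable ℝ f)
    (hf' : StrictMono (deriv f)) {a b : ℝ} (hab : b < a) (c : ℝ) :
    c < invFun (deriv f) ((f a - f b) / (a - b)) ↔
      f b - f c - (b - c) * deriv f c < f a - f c - (a - c) * deriv f c := by
  obtain ⟨η, -, hη⟩ := exists_deriv_eq_slope f hab hf.continuous.continuousOn
    hf.differentiableOn
  have hinv : invFun (deriv f) ((f a - f b) / (a - b)) = η := by
    rw [← hη]
    exact leftInverse_invFun hf'.injective η
  have hsub : 0 < a - b := sub_pos.2 hab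
  have hdiff : f a - f b = (a - b) * deriv f η := by
    rw [hη]
    field_simp
  rw [hinv, ← hf'.lt_iff_lt, ← sub_pos, ← mul_pos_iff_of_pos_left hsub]
  constructor <;> intro h <;> linarith

theorem stmt_16_general (ξ₁ ξ₂ x' : ℝ) (h : ξ₂ < ξ₁) :
    let φ : ℝ → ℝ := fun t => Real.log (1 + Real.exp t)
    let d : ℝ → ℝ → ℝ := fun a b => φ a - φ b - (a - b) * deriv φ b
    let η : ℝ := Function.invFun (deriv φ) ((φ ξ₁ - φ ξ₂) / (ξ₁ - ξ₂))
    let ξ' : ℝ := (1 - x') * ξ₁ + x' * ξ₂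
    (η > ξ' ↔ d ξ₁ ξ' > d ξ₂ ξ') := by
  intro φ d η ξ'
  have hφ : Differentiable ℝ φ := fun t => (hasDerivAt_log_one_add_exp t).differentiableAt
  have hφ' : StrictMono (deriv φ) := by
    rw [deriv_log_one_add_exp]
    exact sigmoid_strictMono
  exact lt_invFun_deriv_slope_iff hφ hφ' h ξ'

theorem stmt_16 (ξ₁ ξ₂ x' : ℝ) (h : ξ₂ < ξ₁) (hx : x' ∈ Set.Ioo (0:ℝ) 1) :
    let φ : ℝ → ℝ := fun t => Real.log (1 + Real.exp t)
    let d : ℝ → ℝ → ℝ := fun a b => φ a - φ b - (a - b) * deriv φ b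
    let η : ℝ := Function.invFun (deriv φ) ((φ ξ₁ - φ ξ₂) / (ξ₁ - ξ₂))
    let ξ' : ℝ := (1 - x') * ξ₁ + x' * ξ₂
    (η > ξ' ↔ d ξ₁ ξ' > d ξ₂ ξ') :=
  stmt_16_general ξ₁ ξ₂ x' h
end
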